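/- arXiv:1509.09020 — 2 statements merged into one kernel-verified Lean document; each statement's English description precedes it below -/
import Mathlib

section
/- Let H(q,p) = Σᵢ pᵢ²/(2hᵢ(q)²) + Φ(q) be a natural Hamiltonian in orthogonal coordinates. Then the Levi-Civita separability condition (∂ʲH)(∂ᵏH)(∂ₖ∂ⱼH) + (∂ⱼH)(∂ₖH)(∂ᵏ∂ʲH) = (∂ʲH)(∂ₖH)(∂ᵏ∂ⱼH) + (∂ⱼH)(∂ᵏH)(∂ₖ∂ʲH) for j ≠ k is equivalent to the identity (1/2)Σᵢ pᵢ² 𝒟_{jk}(hᵢ⁻²) + 𝒟_{jk}(Φ) = 0, where ∂ⱼ = ∂/∂qʲ, ∂ʲ = ∂/∂pⱼ, and 𝒟_{jk}(f) = ∂ⱼ∂ₖf + (∂ⱼ ln hₖ²)(∂ₖf) + (∂ₖ ln hⱼ²)(∂ⱼf). -/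
/-- Partial derivative in the `j`-th coordinate direction. -/
noncomputable def pd {n : ℕ} (j : Fin n) (f : (Fin n → ℝ) → ℝ) (q : Fin n → ℝ) : ℝ :=
  fderiv ℝ f q (Pi.single j 1)

/-- The Stäckel differential operator `𝒟_{jk}` associated to scale factors `h`. -/
noncomputable def Dst {n : ℕ} (h : Fin n → (Fin n → ℝ) → ℝ) (j k : Fin n)
    (f : (Fin n → ℝ) → ℝ) (q : Fin n → ℝ) : ℝ :=
  pd j (fun q' => pd k f q') q
    + pd j (fun q' => Real.log ((h k q') ^ 2)) q * pd k f q
    + pd k (fun q' => Real.log ((h j q') ^ 2)) q * pd j f q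

lemma pd_add {n : ℕ} (j : Fin n) {f g : (Fin n → ℝ) → ℝ} {q : Fin n → ℝ}
    (hf : DifferentiableAt ℝ f q) (hg : DifferentiableAt ℝ g q) :
    pd j (fun x => f x + g x) q = pd j f q + pd j g q := by
  simp [pd, fderiv_fun_add hf hg]

lemma pd_const {n : ℕ} (j : Fin n) (C : ℝ) (q : Fin n → ℝ) :
    pd j (fun _ => C) q = 0 := by simp [pd]

lemma pd_add_const {n : ℕ} (j : Fin n) {f : (Fin n → ℝ) → ℝ} (C : ℝ) (q : Fin n → ℝ) :
    pd j (fun x => f x + C) q = pd j f q := by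
  simp [pd, fderiv_add_const]

lemma pd_const_mul {n : ℕ} (j : Fin n) (a : ℝ) {f : (Fin n → ℝ) → ℝ} {q : Fin n → ℝ}
    (hf : DifferentiableAt ℝ f q) :
    pd j (fun x => a * f x) q = a * pd j f q := by
  simp [pd, fderiv_const_mul hf a]

lemma pd_sum {n m : ℕ} (j : Fin n) (f : Fin m → (Fin n → ℝ) → ℝ) {q : Fin n → ℝ}
    (hf : ∀ i, DifferentiableAt ℝ (f i) q) :
    pd j (fun x => ∑ i, f i x) q = ∑ i, pd j (f i) q := by
  simp [pd, fderiv_fun_sum (fun i _ => hf i)]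

lemma pd_eval {n : ℕ} (j i : Fin n) (g : ℝ → ℝ) (p : Fin n → ℝ)
    (hg : DifferentiableAt ℝ g (p i)) :
    pd j (fun p' => g (p' i)) p = if i = j then deriv g (p i) else 0 := by
  have h1 : HasFDerivAt (fun p' : Fin n → ℝ => p' i)
      (ContinuousLinearMap.proj i : (Fin n → ℝ) →L[ℝ] ℝ) p :=
    hasFDerivAt_apply i p
  have h2 : HasFDerivAt (fun p' : Fin n → ℝ => g (p' i))
      ((fderiv ℝ g (p i)).comp (ContinuousLinearMap.proj i)) p :=
    hg.hasFDerivAt.comp p h1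
  rw [pd, h2.fderiv]
  simp only [ContinuousLinearMap.coe_comp', Function.comp_apply,
    ContinuousLinearMap.proj_apply, Pi.single_apply]
  split
  · next hij => simp [hij, fderiv_apply_one_eq_deriv]
  · simp

lemma pd_quad {n : ℕ} (j : Fin n) (c : Fin n → ℝ) (C : ℝ) (p : Fin n → ℝ) :
    pd j (fun p' => (∑ i, (p' i) ^ 2 * c i) + C) p = 2 * p j * c j := by
  have hdi : ∀ i : Fin n, DifferentiableAt ℝ (fun p' : Fin n → ℝ => (p' i) ^ 2 * c i) p :=
    fun i => ((differentiable_apply i).differentiableAt.pow 2).mul_const _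
  rw [pd_add_const, pd_sum _ _ hdi]
  have : ∀ i : Fin n, pd j (fun p' : Fin n → ℝ => (p' i) ^ 2 * c i) p
      = if i = j then 2 * p i * c i else 0 := by
    intro i
    have := pd_eval j i (fun x => x ^ 2 * c i) p (by fun_prop)
    rw [this]
    congr 1
    rw [deriv_mul_const_field]
    simp
  simp only [this, Finset.sum_ite_eq', Finset.mem_univ, if_true]

lemma pd_smooth {n : ℕ} (j : Fin n) {f : (Fin n → ℝ) → ℝ} (hf : ContDiff ℝ (⊤ : ℕ∞) f) :
    ContDiff ℝ (⊤ : ℕ∞) (pd j f) :=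
  (hf.fderiv_right (by simp)).clm_apply contDiff_const

lemma pd_swap {n : ℕ} (u v : Fin n) {f : (Fin n → ℝ) → ℝ} (hf : ContDiff ℝ (⊤ : ℕ∞) f)
    (q : Fin n → ℝ) :
    pd u (fun q' => pd v f q') q = pd v (fun q' => pd u f q') q := by
  have hf' : Differentiable ℝ (fderiv ℝ f) := (hf.fderiv_right (m := (⊤ : ℕ∞)) (by simp)).differentiable (by simp)
  have key : ∀ a b : Fin n, pd a (fun q' => pd b f q') q
      = fderiv ℝ (fderiv ℝ f) q (Pi.single a 1) (Pi.single b 1) := by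
    intro a b
    have h2 : HasFDerivAt (fun q' => pd b f q')
        (((ContinuousLinearMap.apply ℝ ℝ (Pi.single b 1 : Fin n → ℝ)).comp
          (fderiv ℝ (fderiv ℝ f) q))) q :=
      (ContinuousLinearMap.apply ℝ ℝ (Pi.single b 1 : Fin n → ℝ)).hasFDerivAt.comp q
        (hf'.differentiableAt).hasFDerivAt
    rw [pd, h2.fderiv]
    rfl
  rw [key, key]
  exact second_derivative_symmetric
    (fun y => ((hf.differentiable (by simp)) y).hasFDerivAt)
    (hf'.differentiableAt).hasFDerivAt _ _

/-- For the natural Hamiltonian `H(q,p) = Σᵢ pᵢ²/(2hᵢ(q)²) + Φ(q)`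
in orthogonal coordinates, the Levi-Civita separability condition for `j ≠ k` is
equivalent to `(1/2) Σᵢ pᵢ² 𝒟_{jk}(hᵢ⁻²) + 𝒟_{jk}(Φ) = 0`. -/
theorem levi_civita_iff_staeckel {n : ℕ}
    (h : Fin n → (Fin n → ℝ) → ℝ) (hpos : ∀ i q, 0 < h i q)
    (hsm : ∀ i, ContDiff ℝ (⊤ : ℕ∞) (h i))
    (Φ : (Fin n → ℝ) → ℝ) (hΦ : ContDiff ℝ (⊤ : ℕ∞) Φ)
    (H : (Fin n → ℝ) → (Fin n → ℝ) → ℝ)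
    (hH : ∀ q p, H q p = (∑ i, (p i) ^ 2 / (2 * (h i q) ^ 2)) + Φ q)
    (j k : Fin n) (hjk : j ≠ k) :
    (∀ q p : Fin n → ℝ,
        pd j (fun p' => H q p') p * pd k (fun p' => H q p') p *
            pd k (fun q' => pd j (fun q'' => H q'' p) q') q
          + pd j (fun q' => H q' p) q * pd k (fun q' => H q' p) q *
            pd k (fun p' => pd j (fun p'' => H q p'') p') p
        = pd j (fun p' => H q p') p * pd k (fun q' => H q' p) q *
            pd k (fun p' => pd j (fun q' => H q' p') q) p
          + pd j (fun q' => H q' p) q * pd k (fun p' => H q p') p *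
            pd k (fun q' => pd j (fun p' => H q' p') p) q)
      ↔ (∀ q p : Fin n → ℝ,
          (1 / 2) * (∑ i, (p i) ^ 2 * Dst h j k (fun q' => ((h i q') ^ 2)⁻¹) q)
            + Dst h j k Φ q = 0) := by

  -- basic smoothness facts
  have hne : ∀ i (q : Fin n → ℝ), (h i q) ^ 2 ≠ 0 := fun i q => pow_ne_zero _ (hpos i q).ne'
  have hFs : ∀ i, ContDiff ℝ (⊤ : ℕ∞) (fun q' => ((h i q') ^ 2)⁻¹) :=
    fun i => ((hsm i).pow 2).inv (fun q => hne i q)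
  have hFd : ∀ i (q : Fin n → ℝ), DifferentiableAt ℝ (fun q' => ((h i q') ^ 2)⁻¹) q :=
    fun i q => ((hFs i).differentiable (by simp)) q
  have hΦd : ∀ q : Fin n → ℝ, DifferentiableAt ℝ Φ q := fun q => (hΦ.differentiable (by simp)) q
  -- first p-derivative
  have hP : ∀ (q p : Fin n → ℝ) (u : Fin n),
      pd u (fun p' => H q p') p = p u * ((h u q) ^ 2)⁻¹ := by
    intro q p u
    have hfun : (fun p' => H q p') =
        fun p' => (∑ i, (p' i) ^ 2 * (((h i q) ^ 2)⁻¹ / 2)) + Φ q := by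
      funext p'
      rw [hH]
      congr 1
      refine Finset.sum_congr rfl fun i _ => ?_
      rw [div_eq_mul_inv, mul_inv]
      ring
    rw [hfun, pd_quad]
    ring
  -- first q-derivative
  have hQ : ∀ (q p : Fin n → ℝ) (u : Fin n),
      pd u (fun q' => H q' p) q
        = (∑ i, (p i) ^ 2 * pd u (fun q' => ((h i q') ^ 2)⁻¹) q) / 2 + pd u Φ q := by
    intro q p u
    have hfun : (fun q' => H q' p) =
        fun q' => (∑ i, ((p i) ^ 2 / 2) * ((h i q') ^ 2)⁻¹) + Φ q' := by
      funext q'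
      rw [hH]
      congr 1
      refine Finset.sum_congr rfl fun i _ => ?_
      rw [div_eq_mul_inv, mul_inv]
      ring
    rw [hfun, pd_add _ (DifferentiableAt.fun_sum fun i _ => (hFd i q).const_mul _) (hΦd q),
      pd_sum _ _ (fun i => (hFd i q).const_mul _)]
    congr 1
    rw [Finset.sum_div]
    refine Finset.sum_congr rfl fun i _ => ?_
    rw [pd_const_mul _ _ (hFd i q)]
    ring
  -- second derivative q,q
  have hMqq : ∀ (q p : Fin n → ℝ),
      pd k (fun q' => pd j (fun q'' => H q'' p) q') q
        = (∑ i, (p i) ^ 2 * pd k (fun q' => pd j (fun q'' => ((h i q'') ^ 2)⁻¹) q') q) / 2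
          + pd k (fun q' => pd j Φ q') q := by
    intro q p
    have hfun : (fun q' => pd j (fun q'' => H q'' p) q')
        = fun q' => (2 : ℝ)⁻¹ * (∑ i, (p i) ^ 2 * pd j (fun q'' => ((h i q'') ^ 2)⁻¹) q')
          + pd j Φ q' := by
      funext q'
      rw [hQ q' p j]
      ring
    have hdsum : ∀ q' : Fin n → ℝ, DifferentiableAt ℝ
        (fun q'' => ∑ i, (p i) ^ 2 * pd j (fun w => ((h i w) ^ 2)⁻¹) q'') q' :=
      fun q' => DifferentiableAt.fun_sum fun i _ =>
        (((pd_smooth j (hFs i)).differentiable (by simp)) q').const_mul _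
    rw [hfun, pd_add _ ((hdsum q).const_mul _) (((pd_smooth j hΦ).differentiable (by simp)) q),
      pd_const_mul _ _ (hdsum q),
      pd_sum _ _ (fun i => (((pd_smooth j (hFs i)).differentiable (by simp)) q).const_mul _)]
    have : ∀ i ∈ Finset.univ, pd k (fun q' => (p i) ^ 2 * pd j (fun w => ((h i w) ^ 2)⁻¹) q') q
        = (p i) ^ 2 * pd k (fun q' => pd j (fun w => ((h i w) ^ 2)⁻¹) q') q :=
      fun i _ => pd_const_mul _ _ (((pd_smooth j (hFs i)).differentiable (by simp)) q)
    rw [Finset.sum_congr rfl this]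
    ring
  -- second derivative p,p vanishes
  have hMpp : ∀ (q p : Fin n → ℝ),
      pd k (fun p' => pd j (fun p'' => H q p'') p') p = 0 := by
    intro q p
    have hfun : (fun p' => pd j (fun p'' => H q p'') p')
        = fun p' => (fun x => x * ((h j q) ^ 2)⁻¹) (p' j) := by
      funext p'
      exact hP q p' j
    rw [hfun]
    exact (pd_eval k j (fun x => x * ((h j q) ^ 2)⁻¹) p (by fun_prop)).trans (if_neg hjk)
  -- mixed derivative: p-derivative of q-derivative
  have hMpq : ∀ (q p : Fin n → ℝ),
      pd k (fun p' => pd j (fun q' => H q' p') q) p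
        = p k * pd j (fun q' => ((h k q') ^ 2)⁻¹) q := by
    intro q p
    have hfun : (fun p' => pd j (fun q' => H q' p') q)
        = fun p' => (∑ i, (p' i) ^ 2 * (pd j (fun q' => ((h i q') ^ 2)⁻¹) q / 2))
          + pd j Φ q := by
      funext p'
      rw [hQ q p' j]
      congr 1
      rw [Finset.sum_div]
      exact Finset.sum_congr rfl fun i _ => by ring
    rw [hfun, pd_quad]
    ring
  -- mixed derivative: q-derivative of p-derivative
  have hMqp : ∀ (q p : Fin n → ℝ),
      pd k (fun q' => pd j (fun p' => H q' p') p) q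
        = p j * pd k (fun q' => ((h j q') ^ 2)⁻¹) q := by
    intro q p
    have hfun : (fun q' => pd j (fun p' => H q' p') p)
        = fun q' => p j * ((h j q') ^ 2)⁻¹ := by
      funext q'
      exact hP q' p j
    rw [hfun, pd_const_mul _ _ (hFd j q)]
  -- relation between derivatives of h⁻² and log h²
  have hFL : ∀ i (u : Fin n) (q : Fin n → ℝ),
      pd u (fun q' => ((h i q') ^ 2)⁻¹) q
        = -((h i q) ^ 2)⁻¹ * pd u (fun q' => Real.log ((h i q') ^ 2)) q := by
    intro i u q
    have hGd : DifferentiableAt ℝ (fun q' => (h i q') ^ 2) q :=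
      (((hsm i).differentiable (by simp)) q).pow 2
    have h1 : HasFDerivAt (fun q' => ((h i q') ^ 2)⁻¹)
        ((-(((h i q) ^ 2) ^ 2)⁻¹) • fderiv ℝ (fun q' => (h i q') ^ 2) q) q :=
      (hasDerivAt_inv (hne i q)).comp_hasFDerivAt q hGd.hasFDerivAt
    have h2 : HasFDerivAt (fun q' => Real.log ((h i q') ^ 2))
        ((((h i q) ^ 2)⁻¹) • fderiv ℝ (fun q' => (h i q') ^ 2) q) q :=
      hGd.hasFDerivAt.log (hne i q)
    rw [pd, pd, h1.fderiv, h2.fderiv]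
    simp only [ContinuousLinearMap.coe_smul', Pi.smul_apply, smul_eq_mul]
    rw [pow_two, mul_inv]
    ring
  -- the key pointwise equivalence
  have key : ∀ (q p : Fin n → ℝ),
      (pd j (fun p' => H q p') p * pd k (fun p' => H q p') p *
            pd k (fun q' => pd j (fun q'' => H q'' p) q') q
          + pd j (fun q' => H q' p) q * pd k (fun q' => H q' p) q *
            pd k (fun p' => pd j (fun p'' => H q p'') p') p
        = pd j (fun p' => H q p') p * pd k (fun q' => H q' p) q *
            pd k (fun p' => pd j (fun q' => H q' p') q) p
          + pd j (fun q' => H q' p) q * pd k (fun p' => H q p') p *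
            pd k (fun q' => pd j (fun p' => H q' p') p) q)
      ↔ p j * p k *
          ((1 / 2) * (∑ i, (p i) ^ 2 * Dst h j k (fun q' => ((h i q') ^ 2)⁻¹) q)
            + Dst h j k Φ q) = 0 := by
    intro q p
    have hDsum : ∑ i, (p i) ^ 2 * Dst h j k (fun q' => ((h i q') ^ 2)⁻¹) q
        = (∑ i, (p i) ^ 2 * pd k (fun q' => pd j (fun q'' => ((h i q'') ^ 2)⁻¹) q') q)
          + pd j (fun q' => Real.log ((h k q') ^ 2)) q *
            (∑ i, (p i) ^ 2 * pd k (fun q' => ((h i q') ^ 2)⁻¹) q)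
          + pd k (fun q' => Real.log ((h j q') ^ 2)) q *
            (∑ i, (p i) ^ 2 * pd j (fun q' => ((h i q') ^ 2)⁻¹) q) := by
      have : ∀ i ∈ Finset.univ, (p i) ^ 2 * Dst h j k (fun q' => ((h i q') ^ 2)⁻¹) q
          = (p i) ^ 2 * pd k (fun q' => pd j (fun q'' => ((h i q'') ^ 2)⁻¹) q') q
            + pd j (fun q' => Real.log ((h k q') ^ 2)) q *
              ((p i) ^ 2 * pd k (fun q' => ((h i q') ^ 2)⁻¹) q)
            + pd k (fun q' => Real.log ((h j q') ^ 2)) q *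
              ((p i) ^ 2 * pd j (fun q' => ((h i q') ^ 2)⁻¹) q) := by
        intro i _
        rw [Dst, pd_swap j k (hFs i) q]
        ring
      rw [Finset.sum_congr rfl this]
      simp only [Finset.sum_add_distrib, Finset.mul_sum]
    have hDphi : Dst h j k Φ q
        = pd k (fun q' => pd j Φ q') q
          + pd j (fun q' => Real.log ((h k q') ^ 2)) q * pd k Φ q
          + pd k (fun q' => Real.log ((h j q') ^ 2)) q * pd j Φ q := by
      rw [Dst, pd_swap j k hΦ q]
    rw [hP q p j, hP q p k, hMqq q p, hQ q p j, hQ q p k, hMpp q p, hMpq q p, hMqp q p,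
      hFL k j q, hFL j k q, hDsum, hDphi]
    have hfj : ((h j q) ^ 2)⁻¹ ≠ 0 := inv_ne_zero (hne j q)
    have hfk : ((h k q) ^ 2)⁻¹ ≠ 0 := inv_ne_zero (hne k q)
    constructor
    · intro h1
      have h2 : (((h j q) ^ 2)⁻¹ * ((h k q) ^ 2)⁻¹) *
          (p j * p k *
            ((1 / 2) * ((∑ i, (p i) ^ 2 * pd k (fun q' => pd j (fun q'' => ((h i q'') ^ 2)⁻¹) q') q)
              + pd j (fun q' => Real.log ((h k q') ^ 2)) q *
                (∑ i, (p i) ^ 2 * pd k (fun q' => ((h i q') ^ 2)⁻¹) q)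
              + pd k (fun q' => Real.log ((h j q') ^ 2)) q *
                (∑ i, (p i) ^ 2 * pd j (fun q' => ((h i q') ^ 2)⁻¹) q))
            + (pd k (fun q' => pd j Φ q') q
              + pd j (fun q' => Real.log ((h k q') ^ 2)) q * pd k Φ q
              + pd k (fun q' => Real.log ((h j q') ^ 2)) q * pd j Φ q))) = 0 := by
        linear_combination h1
      rcases mul_eq_zero.mp h2 with h3 | h3
      · exact absurd h3 (mul_ne_zero hfj hfk)
      · exact h3
    · intro h1
      linear_combination (((h j q) ^ 2)⁻¹ * ((h k q) ^ 2)⁻¹) * h1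
  -- now the global equivalence, via the polarization trick
  constructor
  · intro hLC q p
    have hprod : ∀ p' : Fin n → ℝ, p' j * p' k *
        ((1 / 2) * (∑ i, (p' i) ^ 2 * Dst h j k (fun q' => ((h i q') ^ 2)⁻¹) q)
          + Dst h j k Φ q) = 0 := fun p' => (key q p').mp (hLC q p')
    set D : Fin n → ℝ := fun i => Dst h j k (fun q' => ((h i q') ^ 2)⁻¹) q with hD
    set C : ℝ := Dst h j k Φ q with hC
    have hsplit : ∀ x : Fin n → ℝ, ∑ i, (x i) ^ 2 * D i
        = (x j) ^ 2 * D j + (x k) ^ 2 * D k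
          + ∑ i ∈ (Finset.univ.erase j).erase k, (x i) ^ 2 * D i := by
      intro x
      rw [← Finset.add_sum_erase _ _ (Finset.mem_univ j),
        ← Finset.add_sum_erase _ _ (Finset.mem_erase.mpr ⟨(Ne.symm hjk), Finset.mem_univ k⟩)]
      ring
    have hval : ∀ s t : ℝ, s ≠ 0 → t ≠ 0 →
        (1 / 2) * (s ^ 2 * D j + t ^ 2 * D k
          + ∑ i ∈ (Finset.univ.erase j).erase k, (p i) ^ 2 * D i) + C = 0 := by
      intro s t hs ht
      have h1 := hprod (Function.update (Function.update p j s) k t)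
      have hj' : (Function.update (Function.update p j s) k t) j = s := by
        rw [Function.update_of_ne hjk, Function.update_self]
      have hk' : (Function.update (Function.update p j s) k t) k = t :=
        Function.update_self _ _ _
      rw [hj', hk', hsplit] at h1
      have h2 : ∑ i ∈ (Finset.univ.erase j).erase k,
          ((Function.update (Function.update p j s) k t) i) ^ 2 * D i
          = ∑ i ∈ (Finset.univ.erase j).erase k, (p i) ^ 2 * D i := by
        refine Finset.sum_congr rfl fun i hi => ?_
        have hik : i ≠ k := (Finset.mem_erase.mp hi).1
        have hij : i ≠ j := (Finset.mem_erase.mp (Finset.mem_erase.mp hi).2).1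
        rw [Function.update_of_ne hik, Function.update_of_ne hij]
      rw [hj', hk', h2] at h1
      have := mul_ne_zero hs ht
      rcases mul_eq_zero.mp h1 with h3 | h3
      · exact absurd h3 (by rw [mul_comm] at this ⊢; exact this)
      · exact h3
    have e11 := hval 1 1 one_ne_zero one_ne_zero
    have e21 := hval 2 1 two_ne_zero one_ne_zero
    have e12 := hval 1 2 one_ne_zero two_ne_zero
    have hDj : D j = 0 := by linarith [e11, e21]
    have hDk : D k = 0 := by linarith [e11, e12]
    rw [hsplit p, hDj, hDk]
    have : (1:ℝ) ^ 2 * D j = 0 := by rw [hDj]; ring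
    nlinarith [e11, hDj, hDk]
  · intro hE q p
    exact (key q p).mpr (by rw [hE q p]; ring)
end

section
/- Let ζᵢ : U → ℝ be smooth functions on an open set U ⊆ ℝⁿ satisfying ∂ζᵢ/∂qʲ = (ζⱼ − ζᵢ) ∂ln(hᵢ⁻²)/∂qʲ for all i,j, with hᵢ : U → (0,∞) smooth. Then for all i and all j ≠ k, (ζⱼ − ζₖ) hᵢ² 𝒟_{jk}(hᵢ⁻²) = 0, where 𝒟_{jk}(f) = ∂ⱼ∂ₖf + (∂ⱼ ln hₖ²)(∂ₖf) + (∂ₖ ln hⱼ²)(∂ⱼf). In particular, if ζⱼ(q) ≠ ζₖ(q) for all q and all j ≠ k, the Stäckel condition 𝒟_{jk}(hᵢ⁻²) = 0 holds. -/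
open scoped ContDiff

private lemma one_le_inf : (1 : WithTop ℕ∞) ≤ ∞ := by
  rw [show (1 : WithTop ℕ∞) = ((1:ℕ∞) : WithTop ℕ∞) by rfl, WithTop.coe_le_coe]
  exact le_top

private lemma two_le_inf : (2 : WithTop ℕ∞) ≤ ∞ := by
  rw [show (2 : WithTop ℕ∞) = ((2:ℕ∞) : WithTop ℕ∞) by rfl, WithTop.coe_le_coe]
  exact le_top

private lemma pd_congr {n : ℕ} {f g : (Fin n → ℝ) → ℝ} {q : Fin n → ℝ}
    (h : f =ᶠ[nhds q] g) (j : Fin n) : pd j f q = pd j g q := by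
  unfold pd; rw [h.fderiv_eq]

private lemma pd_neg {n : ℕ} (f : (Fin n → ℝ) → ℝ) (q : Fin n → ℝ) (j : Fin n) :
    pd j (fun x => -f x) q = -pd j f q := by
  unfold pd; rw [fderiv_fun_neg]; simp

private lemma pd_mul {n : ℕ} {f g : (Fin n → ℝ) → ℝ} {q : Fin n → ℝ}
    (hf : DifferentiableAt ℝ f q) (hg : DifferentiableAt ℝ g q) (j : Fin n) :
    pd j (fun x => f x * g x) q = pd j f q * g q + f q * pd j g q := by
  unfold pd; rw [fderiv_fun_mul hf hg]; simp; ring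

private lemma pd_sub {n : ℕ} {f g : (Fin n → ℝ) → ℝ} {q : Fin n → ℝ}
    (hf : DifferentiableAt ℝ f q) (hg : DifferentiableAt ℝ g q) (j : Fin n) :
    pd j (fun x => f x - g x) q = pd j f q - pd j g q := by
  unfold pd; rw [fderiv_fun_sub hf hg]; simp

private lemma contDiffAt_pd {n : ℕ} {f : (Fin n → ℝ) → ℝ} {q : Fin n → ℝ}
    (hf : ContDiffAt ℝ ∞ f q) (j : Fin n) :
    ContDiffAt ℝ ∞ (fun x => pd j f x) q := by
  have h1 : ContDiffAt ℝ ∞ (fderiv ℝ f) q := hf.fderiv_right (by simp)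
  exact (ContinuousLinearMap.apply ℝ ℝ (Pi.single j 1)).contDiff.comp_contDiffAt q h1

private lemma pd_pd {n : ℕ} {f : (Fin n → ℝ) → ℝ} {q : Fin n → ℝ}
    (hf : ContDiffAt ℝ ∞ f q) (j k : Fin n) :
    pd j (fun x => pd k f x) q = fderiv ℝ (fderiv ℝ f) q (Pi.single j 1) (Pi.single k 1) := by
  have h1 : ContDiffAt ℝ ∞ (fderiv ℝ f) q := hf.fderiv_right (by simp)
  have hd : DifferentiableAt ℝ (fderiv ℝ f) q := h1.differentiableAt (by simp)
  have h2 : HasFDerivAt (fun x => pd k f x)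
      ((ContinuousLinearMap.apply ℝ ℝ (Pi.single k 1)).comp (fderiv ℝ (fderiv ℝ f) q)) q := by
    exact
      (ContinuousLinearMap.apply ℝ ℝ (Pi.single k 1)).hasFDerivAt.comp q hd.hasFDerivAt
  unfold pd at h2 ⊢
  rw [h2.fderiv]
  rfl

private lemma clairaut {n : ℕ} {f : (Fin n → ℝ) → ℝ} {q : Fin n → ℝ}
    (hf : ContDiffAt ℝ ∞ f q) (j k : Fin n) :
    pd j (fun x => pd k f x) q = pd k (fun x => pd j f x) q := by
  rw [pd_pd hf, pd_pd hf]
  exact hf.isSymmSndFDerivAt (by simp [minSmoothness_of_isRCLikeNormedField, two_le_inf]) _ _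

/-- If `∂ζᵢ/∂qʲ = (ζⱼ − ζᵢ) ∂ln(hᵢ⁻²)/∂qʲ` on an open set `U`, then
`(ζⱼ − ζₖ) hᵢ² 𝒟_{jk}(hᵢ⁻²) = 0` on `U`; in particular, if the `ζ`'s are pairwise
distinct pointwise, the Stäckel coordinate condition holds on `U`. -/
theorem zeta_compatibility_forces_staeckel {n : ℕ}
    (U : Set (Fin n → ℝ)) (hU : IsOpen U)
    (h : Fin n → (Fin n → ℝ) → ℝ) (hpos : ∀ i q, 0 < h i q)
    (hsm : ∀ i, ContDiffOn ℝ (⊤ : ℕ∞) (h i) U)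
    (ζ : Fin n → (Fin n → ℝ) → ℝ) (hζ : ∀ i, ContDiffOn ℝ (⊤ : ℕ∞) (ζ i) U)
    (hrel : ∀ (i j : Fin n), ∀ q ∈ U,
      pd j (ζ i) q
        = (ζ j q - ζ i q) * pd j (fun q' => Real.log (((h i q') ^ 2)⁻¹)) q) :
    (∀ (i j k : Fin n), j ≠ k → ∀ q ∈ U,
        (ζ j q - ζ k q) * ((h i q) ^ 2 *
          Dst h j k (fun q' => ((h i q') ^ 2)⁻¹) q) = 0)
      ∧ ((∀ (j k : Fin n), j ≠ k → ∀ q ∈ U, ζ j q ≠ ζ k q) →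
          ∀ (i j k : Fin n), j ≠ k → ∀ q ∈ U,
            Dst h j k (fun q' => ((h i q') ^ 2)⁻¹) q = 0) := by
  have key : ∀ (i j k : Fin n), j ≠ k → ∀ q ∈ U,
      (ζ j q - ζ k q) * ((h i q) ^ 2 *
        Dst h j k (fun q' => ((h i q') ^ 2)⁻¹) q) = 0 := by
    intro i j k hjk q hq
    have memU : ∀ q' ∈ U, U ∈ nhds q' := fun q' hq' => hU.mem_nhds hq'
    have ch : ∀ (m : Fin n), ∀ q' ∈ U, ContDiffAt ℝ ∞ (h m) q' := fun m q' hq' =>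
      ((hsm m).contDiffAt (memU q' hq')).of_le (by simp)
    have hne : ∀ (m : Fin n) (q' : Fin n → ℝ), (h m q') ^ 2 ≠ 0 := fun m q' =>
      pow_ne_zero 2 (hpos m q').ne'
    have cL : ∀ (m : Fin n), ∀ q' ∈ U,
        ContDiffAt ℝ ∞ (fun x => Real.log ((h m x) ^ 2)) q' :=
      fun m q' hq' => ((ch m q' hq').pow 2).log (hne m q')
    have cF : ∀ q' ∈ U, ContDiffAt ℝ ∞ (fun x => ((h i x) ^ 2)⁻¹) q' := fun q' hq' =>
      ((ch i q' hq').pow 2).inv (hne i q')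
    have cz : ∀ (m : Fin n), ∀ q' ∈ U, ContDiffAt ℝ ∞ (ζ m) q' := fun m q' hq' =>
      ((hζ m).contDiffAt (memU q' hq')).of_le (by simp)
    -- first derivative of F = h i ^(-2)
    have derivF : ∀ (m : Fin n), ∀ q' ∈ U,
        pd m (fun x => ((h i x) ^ 2)⁻¹) q'
          = -(((h i q') ^ 2)⁻¹ * pd m (fun x => Real.log ((h i x) ^ 2)) q') := by
      intro m q' hq'
      have hs : HasFDerivAt (fun x => (h i x) ^ 2)
          (fderiv ℝ (fun x => (h i x) ^ 2) q') q' :=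
        ((((ch i q' hq').pow 2)).differentiableAt (by simp)).hasFDerivAt
      have hlog := hs.log (hne i q')
      have hinv : HasFDerivAt (fun x => ((h i x) ^ 2)⁻¹)
          ((ContinuousLinearMap.smulRight (1 : ℝ →L[ℝ] ℝ) (-(((h i q') ^ 2) ^ 2)⁻¹)).comp
            (fderiv ℝ (fun x => (h i x) ^ 2) q')) q' := by
        simpa [Function.comp_def, ContinuousLinearMap.smulRight_one_eq_toSpanSingleton] using (hasFDerivAt_inv (hne i q')).comp q' hs
      unfold pd
      rw [hinv.fderiv, hlog.fderiv]
      simp only [ContinuousLinearMap.coe_comp', Function.comp_apply,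
        ContinuousLinearMap.smulRight_apply, ContinuousLinearMap.one_apply,
        ContinuousLinearMap.coe_smul', Pi.smul_apply, smul_eq_mul]
      rw [show (((h i q') ^ 2 : ℝ) ^ 2)⁻¹ = ((h i q') ^ 2)⁻¹ * ((h i q') ^ 2)⁻¹ by
        rw [sq, mul_inv]]
      ring
    -- first derivative of ζ in terms of L
    have derivζ : ∀ (a m : Fin n), ∀ q' ∈ U,
        pd m (ζ a) q' = (ζ a q' - ζ m q') * pd m (fun x => Real.log ((h a x) ^ 2)) q' := by
      intro a m q' hq'
      have e1 : (fun x => Real.log (((h a x) ^ 2)⁻¹))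
          = fun x => -Real.log ((h a x) ^ 2) := by
        funext x; exact Real.log_inv _
      have h0 := hrel a m q' hq'
      rw [e1, pd_neg] at h0
      rw [h0]; ring
    -- differentiability facts at q
    have dF : DifferentiableAt ℝ (fun x => ((h i x) ^ 2)⁻¹) q :=
      (cF q hq).differentiableAt (by simp)
    have dpdL : ∀ m : Fin n,
        DifferentiableAt ℝ (fun x => pd m (fun y => Real.log ((h i y) ^ 2)) x) q :=
      fun m => (contDiffAt_pd (cL i q hq) m).differentiableAt (by simp)
    have dz : ∀ m : Fin n, DifferentiableAt ℝ (ζ m) q :=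
      fun m => (cz m q hq).differentiableAt (by simp)
    -- second derivative of F
    have eF : pd j (fun x => pd k (fun y => ((h i y) ^ 2)⁻¹) x) q
        = ((h i q) ^ 2)⁻¹ * (pd j (fun x => Real.log ((h i x) ^ 2)) q
            * pd k (fun x => Real.log ((h i x) ^ 2)) q)
          - ((h i q) ^ 2)⁻¹ * pd j (fun x => pd k (fun y => Real.log ((h i y) ^ 2)) x) q := by
      have ev : (fun x => pd k (fun y => ((h i y) ^ 2)⁻¹) x) =ᶠ[nhds q]
          (fun x => -(((h i x) ^ 2)⁻¹ * pd k (fun y => Real.log ((h i y) ^ 2)) x)) :=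
        Filter.eventuallyEq_of_mem (memU q hq) (fun x hx => derivF k x hx)
      rw [pd_congr ev j, pd_neg, pd_mul dF (dpdL k), derivF j q hq]
      ring
    -- second derivatives of ζ i
    have Eζ : ∀ a b : Fin n, pd b (fun x => pd a (ζ i) x) q
        = ((ζ i q - ζ b q) * pd b (fun x => Real.log ((h i x) ^ 2)) q
            - (ζ a q - ζ b q) * pd b (fun x => Real.log ((h a x) ^ 2)) q)
            * pd a (fun x => Real.log ((h i x) ^ 2)) q
          + (ζ i q - ζ a q) * pd b (fun x => pd a (fun y => Real.log ((h i y) ^ 2)) x) q := by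
      intro a b
      have ev : (fun x => pd a (ζ i) x) =ᶠ[nhds q]
          (fun x => (ζ i x - ζ a x) * pd a (fun y => Real.log ((h i y) ^ 2)) x) :=
        Filter.eventuallyEq_of_mem (memU q hq) (fun x hx => derivζ i a x hx)
      rw [pd_congr ev b, pd_mul (f := fun x => ζ i x - ζ a x) ((dz i).sub (dz a)) (dpdL a),
        pd_sub (dz i) (dz a), derivζ i b q hq, derivζ a b q hq]
    have hsymζ := clairaut (cz i q hq) j k
    have hsymL := clairaut (cL i q hq) j k
    have E1 := Eζ j k
    have E2 := Eζ k j
    rw [← hsymL] at E1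
    have Ecomb := (E2.symm.trans hsymζ).trans E1
    simp only [Dst]
    rw [eF, derivF j q hq, derivF k q hq]
    linear_combination (-(h i q) ^ 2 * ((h i q) ^ 2)⁻¹) * Ecomb
  refine ⟨key, ?_⟩
  intro hdist i j k hjk q hq
  have h1 := key i j k hjk q hq
  have h2 : ζ j q - ζ k q ≠ 0 := sub_ne_zero.mpr (hdist j k hjk q hq)
  have h3 : (h i q) ^ 2 ≠ 0 := pow_ne_zero 2 (hpos i q).ne'
  rcases mul_eq_zero.mp h1 with h' | h'
  · exact absurd h' h2
  · rcases mul_eq_zero.mp h' with h'' | h''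
    · exact absurd h'' h3
    · exact h''
end
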